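/- For every z > 0, the Gauss measure of the set of x in [0,1) whose n-th continued fraction digit a_n(x) is strictly greater than z equals (1/log 2) · log(1 + 1/(⌊z⌋+1)). -/

import Mathlib

open MeasureTheory Filter Set

/-- The Gauss map `τ(x) = 1/x - ⌊1/x⌋`, with `τ(0) = 0`. -/
noncomputable def gaussMap (x : ℝ) : ℝ := if x = 0 then 0 else 1 / x - ⌊1 / x⌋

/-- The `n`-th continued fraction digit `a_n(x) = ⌊1/τ^{n-1}(x)⌋`. -/
noncomputable def cfDigit (n : ℕ) (x : ℝ) : ℕ := ⌊1 / (gaussMap^[n - 1] x)⌋₊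

/-- The Gauss measure on `[0,1)` with density `1/((x+1) log 2)`. -/
noncomputable def gaussMeasure : Measure ℝ :=
  (volume.restrict (Set.Ico (0 : ℝ) 1)).withDensity
    (fun x => ENNReal.ofReal (1 / ((x + 1) * Real.log 2)))

/-!
The Gauss measure `γ` is invariant under the Gauss map `τ`. For `0 ≤ a ≤ b ≤ 1` the points of
`(0, 1]` that `τ` sends into `[a, b)` form the disjoint union over `m` of the intervals
`(1 / (m + 1 + b), 1 / (m + 1 + a)]`, and since `γ (c, d] = log ((1 + d) / (1 + c)) / log 2`, their
measures telescope to `γ [a, b)`. A finite measure living on `[0, 1)` is determined by these values,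
so `γ ∘ τ⁻¹ = γ`. Hence `a_n` has the same law as `a_1 = ⌊1 / x⌋₊`, and `{a_1 > z}` agrees with
`(0, 1 / (⌊z⌋₊ + 1)]` up to a null set; the irrationality condition only removes a countable set.
-/

open Real Topology Function

namespace MeasureTheory.Measure

variable {α : Type*} [TopologicalSpace α] [MeasurableSpace α] [SecondCountableTopology α]
  [LinearOrder α] [OrderTopology α] [BorelSpace α]

theorem ext_of_Ico_of_measure_compl_eq_zero {μ ν : Measure α} [IsFiniteMeasure μ] {s t : α}
    (hμ : μ (Ico s t)ᶜ = 0) (hν : ν (Ico s t)ᶜ = 0)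
    (h : ∀ a b, s ≤ a → a < b → b ≤ t → μ (Ico a b) = ν (Ico a b)) : μ = ν := by
  have h_Ico : ∀ a b, μ (Ico a b) = ν (Ico a b) := by
    intro a b
    rw [← measure_inter_conull hμ, ← measure_inter_conull hν, Ico_inter_Ico]
    rcases lt_or_ge (max a s) (min b t) with hlt | hge
    · exact h _ _ (le_max_right _ _) hlt (min_le_right _ _)
    · simp [Ico_eq_empty_of_le hge]
  refine ext_of_Ico_finite μ ν ?_ fun a b _ => h_Ico a b
  rw [← measure_inter_conull hμ, ← measure_inter_conull hν, univ_inter, h_Ico]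

end MeasureTheory.Measure

theorem hasSum_sub_succ_of_tendsto {f : ℕ → ℝ} {l : ℝ} (hf : Tendsto f atTop (𝓝 l))
    (hnn : ∀ n, 0 ≤ f n - f (n + 1)) : HasSum (fun n => f n - f (n + 1)) (f 0 - l) := by
  rw [hasSum_iff_tendsto_nat_of_nonneg hnn]
  simp_rw [Finset.sum_range_sub']
  exact tendsto_const_nhds.sub hf

theorem Int.fract_mem_Ico_iff_exists_nat {R : Type*} [CommRing R] [LinearOrder R]
    [IsStrictOrderedRing R] [FloorRing R] {y a b : R} (hy : 1 ≤ y) (ha : 0 ≤ a) (hb : b ≤ 1) :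
    Int.fract y ∈ Ico a b ↔ ∃ m : ℕ, y ∈ Ico (m + 1 + a) (m + 1 + b) := by
  constructor
  · rintro ⟨hay, hyb⟩
    obtain ⟨m, hm⟩ : ∃ m : ℕ, ⌊y⌋₊ = m + 1 :=
      Nat.exists_eq_add_one.2 (Nat.one_le_floor_iff _ |>.2 hy)
    have hfract : Int.fract y = y - (m + 1) := by
      rw [Int.fract, ← natCast_floor_eq_intCast_floor (by linarith), hm]
      push_cast
      ring
    exact ⟨m, by linarith, by linarith⟩
  · rintro ⟨m, hmy, hym⟩
    have hfract : Int.fract y = y - (m + 1) :=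
      Int.fract_eq_iff.2 ⟨by linarith, by linarith, m + 1, by push_cast; ring⟩
    exact ⟨by linarith, by linarith⟩

theorem mem_Ioc_one_div_iff {K : Type*} [Field K] [LinearOrder K] [IsStrictOrderedRing K]
    {x c d : K} (hx : 0 < x) (hc : 0 < c) (hd : 0 < d) :
    x ∈ Ioc (1 / d) (1 / c) ↔ 1 / x ∈ Ico c d := by
  rw [mem_Ioc, mem_Ico, one_div_lt hd hx, le_one_div hx hc, and_comm]

theorem measure_compl_setOf_irrational (μ : Measure ℝ) [NullSingletonClass μ] :
    μ {x | Irrational x}ᶜ = 0 := by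
  have : {x : ℝ | Irrational x}ᶜ = range ((↑) : ℚ → ℝ) := by ext; simp [Irrational]
  exact this ▸ (countable_range _).measure_zero μ

theorem gaussMap_eq_fract (x : ℝ) : gaussMap x = Int.fract (1 / x) := by
  rcases eq_or_ne x 0 with rfl | hx
  · simp [gaussMap]
  · rw [gaussMap, if_neg hx, Int.fract]

theorem measurable_gaussMap : Measurable gaussMap := by
  rw [funext gaussMap_eq_fract]
  exact measurable_fract.comp (measurable_const.div measurable_id)

theorem gaussMap_mem_Ico (x : ℝ) : gaussMap x ∈ Ico 0 1 :=
  gaussMap_eq_fract x ▸ ⟨Int.fract_nonneg _, Int.fract_lt_one _⟩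

theorem preimage_gaussMap_Ico_inter_Ioc {a b : ℝ} (ha : 0 ≤ a) (hab : a ≤ b) (hb : b ≤ 1) :
    gaussMap ⁻¹' Ico a b ∩ Ioc 0 1 = ⋃ m : ℕ, Ioc (1 / (m + 1 + b)) (1 / (m + 1 + a)) := by
  have hpos : ∀ (m : ℕ) {c : ℝ}, 0 ≤ c → 0 < (m : ℝ) + 1 + c := fun m c hc => by positivity
  have hfract {x : ℝ} (hx : x ∈ Ioc 0 1) :=
    Int.fract_mem_Ico_iff_exists_nat (one_le_one_div hx.1 hx.2) ha hb
  ext x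
  simp only [mem_inter_iff, mem_preimage, mem_iUnion, gaussMap_eq_fract]
  refine ⟨fun ⟨hτx, hx⟩ => ?_, fun ⟨m, hm⟩ => ?_⟩
  · obtain ⟨m, hm⟩ := (hfract hx).1 hτx
    exact ⟨m, (mem_Ioc_one_div_iff hx.1 (hpos m ha) (hpos m (ha.trans hab))).2 hm⟩
  · have hx : x ∈ Ioc 0 1 :=
      ⟨(one_div_pos.2 (hpos m (ha.trans hab))).trans hm.1,
        hm.2.trans (div_le_one_of_le₀ (by linarith [hpos m ha]) (hpos m ha).le)⟩
    have hm' := (mem_Ioc_one_div_iff hx.1 (hpos m ha) (hpos m (ha.trans hab))).1 hm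
    exact ⟨(hfract hx).2 ⟨m, hm'⟩, hx⟩

theorem pairwise_disjoint_Ioc_one_div {a b : ℝ} (ha : 0 ≤ a) (hab : a ≤ b) (hb : b ≤ 1) :
    Pairwise (Disjoint on (fun m : ℕ => Ioc (1 / (m + 1 + b)) (1 / (m + 1 + a)))) := by
  refine (pairwise_disjoint_on _).2 fun p q hpq => (Ioc_disjoint_Ioc_of_le ?_).symm
  have hpq : (p : ℝ) + 1 ≤ q := by exact_mod_cast hpq
  exact one_div_le_one_div_of_le (add_pos_of_pos_of_nonneg (by positivity) (ha.trans hab))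
    (by linarith)

theorem intervalIntegrable_one_div_add_one_mul_log_two {a b : ℝ} (ha : -1 < a) (hb : -1 < b) :
    IntervalIntegrable (fun x => 1 / ((x + 1) * log 2)) volume a b := by
  refine ContinuousOn.intervalIntegrable fun x hx => ?_
  have : (x + 1) * log 2 ≠ 0 :=
    mul_ne_zero (by linarith [(lt_min ha hb).trans_le hx.1]) (log_pos one_lt_two).ne'
  fun_prop (disch := assumption)

theorem integral_one_div_add_one_mul_log_two {a b : ℝ} (ha : -1 < a) (hb : -1 < b) :
    ∫ x in a..b, 1 / ((x + 1) * log 2) = (log (1 + b) - log (1 + a)) / log 2 := by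
  rw [intervalIntegral.integral_eq_sub_of_hasDerivAt (f := fun y => log (1 + y) / log 2) _
    (intervalIntegrable_one_div_add_one_mul_log_two ha hb)]
  · ring
  · intro x hx
    have hx1 : 1 + x ≠ 0 := by linarith [(lt_min ha hb).trans_le hx.1]
    refine ((((hasDerivAt_id' x).const_add 1).log hx1).div_const (log 2)).congr_deriv ?_
    rw [add_comm, div_div]

theorem gaussMeasure_Ioc {a b : ℝ} (ha : 0 ≤ a) (hab : a ≤ b) (hb : b ≤ 1) :
    gaussMeasure (Ioc a b) = ENNReal.ofReal ((log (1 + b) - log (1 + a)) / log 2) := by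
  have ha' : -1 < a := by linarith
  have hsub : Ioc a b ⊆ Icc 0 1 := Ioc_subset_Icc_self.trans (Icc_subset_Icc ha hb)
  rw [gaussMeasure, withDensity_apply _ measurableSet_Ioc, Measure.restrict_congr_set Ico_ae_eq_Icc,
    Measure.restrict_restrict measurableSet_Ioc, inter_eq_left.2 hsub,
    ← ofReal_integral_eq_lintegral_ofReal, ← intervalIntegral.integral_of_le hab,
    integral_one_div_add_one_mul_log_two ha' (by linarith)]
  · exact (intervalIntegrable_one_div_add_one_mul_log_two ha' (by linarith)).1
  · filter_upwards [ae_restrict_mem measurableSet_Ioc] with x hx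
    have : 0 < x + 1 := by linarith [hx.1]
    have := log_pos one_lt_two
    positivity

instance : NullSingletonClass gaussMeasure := by
  unfold gaussMeasure
  infer_instance

theorem gaussMeasure_compl_Ico : gaussMeasure (Ico 0 1)ᶜ = 0 :=
  withDensity_absolutelyContinuous _ _ <| by
    rw [Measure.restrict_apply measurableSet_Ico.compl, compl_inter_self, measure_empty]

theorem gaussMeasure_compl_Ioc : gaussMeasure (Ioc 0 1)ᶜ = 0 :=
  (measure_congr Ico_ae_eq_Ioc.compl).symm.trans gaussMeasure_compl_Ico

instance : IsProbabilityMeasure gaussMeasure := by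
  refine ⟨?_⟩
  rw [← measure_inter_conull gaussMeasure_compl_Ioc, univ_inter,
    gaussMeasure_Ioc le_rfl zero_le_one le_rfl]
  norm_num [(log_pos one_lt_two).ne']

theorem log_one_add_one_div {s : ℝ} (hs : 0 < s) : log (1 + 1 / s) = log (s + 1) - log s := by
  rw [← log_div (by linarith) hs.ne', add_div, div_self hs.ne', add_comm]

theorem log_one_add_one_div_le {s t : ℝ} (hs : 0 < s) (hst : s ≤ t) :
    log (1 + 1 / t) ≤ log (1 + 1 / s) := by
  have := one_div_pos.2 (hs.trans_le hst)
  gcongr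

theorem hasSum_log_one_add_one_div_sub {a b : ℝ} (ha : -1 < a) (hab : a ≤ b) :
    HasSum (fun m : ℕ => log (1 + 1 / (m + 1 + a)) - log (1 + 1 / (m + 1 + b)))
      (log (1 + b) - log (1 + a)) := by
  have hpos : ∀ (m : ℕ) {c : ℝ}, a ≤ c → 0 < (m : ℝ) + 1 + c := fun m c hc => by
    have := m.cast_nonneg (α := ℝ)
    linarith
  set g : ℕ → ℝ := fun m => log (m + 1 + b) - log (m + 1 + a)
  have hg : Tendsto g atTop (𝓝 0) := by
    have h c : Tendsto (fun m : ℕ => log ((m + 1 : ℝ) + c) - log (m + 1)) atTop (𝓝 0) :=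
      (tendsto_log_comp_add_sub_log c).comp
        (tendsto_atTop_add_const_right _ _ tendsto_natCast_atTop_atTop)
    simpa [g] using (h b).sub (h a)
  have hterm : ∀ m : ℕ,
      log (1 + 1 / (m + 1 + a)) - log (1 + 1 / (m + 1 + b)) = g m - g (m + 1) := fun m => by
    rw [log_one_add_one_div (hpos m le_rfl), log_one_add_one_div (hpos m hab)]
    simp only [g]
    push_cast
    ring_nf
  have hnonneg : ∀ m : ℕ, 0 ≤ log (1 + 1 / (m + 1 + a)) - log (1 + 1 / (m + 1 + b)) := fun m =>
    sub_nonneg.2 <| log_one_add_one_div_le (hpos m le_rfl) (by linarith)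
  simp_rw [hterm] at hnonneg ⊢
  simpa [g] using hasSum_sub_succ_of_tendsto hg hnonneg

theorem gaussMeasure_preimage_gaussMap_Ico {a b : ℝ} (ha : 0 ≤ a) (hab : a ≤ b) (hb : b ≤ 1) :
    gaussMeasure (gaussMap ⁻¹' Ico a b) = gaussMeasure (Ico a b) := by
  have hpos : ∀ (m : ℕ) {c : ℝ}, 0 ≤ c → 0 < (m : ℝ) + 1 + c := fun m c hc => by positivity
  have hpiece : ∀ m : ℕ, gaussMeasure (Ioc (1 / (m + 1 + b)) (1 / (m + 1 + a))) =
      ENNReal.ofReal ((log (1 + 1 / (m + 1 + a)) - log (1 + 1 / (m + 1 + b))) / log 2) :=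
    fun m => gaussMeasure_Ioc (one_div_pos.2 (hpos m (ha.trans hab))).le
      (one_div_le_one_div_of_le (hpos m ha) (by linarith))
      (div_le_one_of_le₀ (by linarith [hpos m ha]) (hpos m ha).le)
  have hsum := (hasSum_log_one_add_one_div_sub (by linarith) hab).div_const (log 2)
  rw [← measure_inter_conull gaussMeasure_compl_Ioc, preimage_gaussMap_Ico_inter_Ioc ha hab hb,
    measure_iUnion (pairwise_disjoint_Ioc_one_div ha hab hb) fun _ => measurableSet_Ioc,
    measure_congr Ico_ae_eq_Ioc, gaussMeasure_Ioc ha hab hb]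
  simp_rw [hpiece]
  rw [← ENNReal.ofReal_tsum_of_nonneg _ hsum.summable, hsum.tsum_eq]
  exact fun m => div_nonneg (sub_nonneg.2 <| log_one_add_one_div_le (hpos m ha) (by linarith))
    (log_nonneg one_le_two)

theorem gaussMeasure_map_gaussMap : gaussMeasure.map gaussMap = gaussMeasure := by
  refine Measure.ext_of_Ico_of_measure_compl_eq_zero ?_ gaussMeasure_compl_Ico
    fun a b ha hab hb => ?_
  · rw [Measure.map_apply measurable_gaussMap measurableSet_Ico.compl, preimage_compl,
      (eq_univ_of_forall gaussMap_mem_Ico : gaussMap ⁻¹' Ico 0 1 = univ), compl_univ, measure_empty]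
  · rw [Measure.map_apply measurable_gaussMap measurableSet_Ico,
      gaussMeasure_preimage_gaussMap_Ico ha hab.le hb]

theorem gaussMeasure_map_iterate_gaussMap (n : ℕ) :
    gaussMeasure.map gaussMap^[n] = gaussMeasure := by
  induction n with
  | zero => exact Measure.map_id
  | succ n ih =>
    rw [Function.iterate_succ', ← Measure.map_map measurable_gaussMap
      (measurable_gaussMap.iterate n), ih, gaussMeasure_map_gaussMap]

theorem setOf_lt_floor_one_div_inter_Ioc (z : ℝ) :
    {y : ℝ | z < ⌊1 / y⌋₊} ∩ Ioc 0 1 = Ioc 0 (1 / ((⌊z⌋₊ : ℝ) + 1)) := by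
  have hk : (0 : ℝ) < ⌊z⌋₊ + 1 := by positivity
  have key : ∀ y ∈ Ioc (0 : ℝ) 1, z < ⌊1 / y⌋₊ ↔ y ≤ 1 / (⌊z⌋₊ + 1) := fun y hy => by
    have hy1 : 1 ≤ 1 / y := one_le_one_div hy.1 hy.2
    rw [← Nat.floor_lt' (Nat.pos_iff_ne_zero.1 <| (Nat.one_le_floor_iff _).2 hy1),
      Nat.lt_iff_add_one_le, Nat.le_floor_iff (by linarith), le_one_div hy.1 hk]
    push_cast
    rfl
  ext y
  refine ⟨fun ⟨hz, hy⟩ => ⟨hy.1, (key y hy).1 hz⟩, fun hy => ?_⟩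
  have hy' : y ∈ Ioc 0 1 := ⟨hy.1, hy.2.trans (div_le_one_of_le₀ (by simp) hk.le)⟩
  exact ⟨(key y hy').2 hy.2, hy'⟩

theorem gauss_measure_digit_gt_general (z : ℝ) (n : ℕ) :
    gaussMeasure {x | Irrational x ∧ z < (cfDigit n x : ℝ)} =
      ENNReal.ofReal ((1 / Real.log 2) * Real.log (1 + 1 / ((⌊z⌋₊ : ℝ) + 1))) := by
  set B := {y : ℝ | z < ⌊1 / y⌋₊}
  have hB : MeasurableSet B := measurableSet_lt measurable_const (by fun_prop)
  calc gaussMeasure {x | Irrational x ∧ z < (cfDigit n x : ℝ)}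
      = gaussMeasure (gaussMap^[n - 1] ⁻¹' B) := by
        rw [ofPred_and, inter_comm, measure_inter_conull (measure_compl_setOf_irrational _)]
        rfl
    _ = gaussMeasure B := by
        rw [← Measure.map_apply (measurable_gaussMap.iterate _) hB,
          gaussMeasure_map_iterate_gaussMap]
    _ = gaussMeasure (Ioc 0 (1 / ((⌊z⌋₊ : ℝ) + 1))) := by
        rw [← measure_inter_conull gaussMeasure_compl_Ioc, setOf_lt_floor_one_div_inter_Ioc]
    _ = _ := by
        rw [gaussMeasure_Ioc le_rfl (by positivity) (div_le_one_of_le₀ (by simp) (by positivity)),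
          add_zero, log_one, sub_zero, one_div_mul_eq_div]

theorem gauss_measure_digit_gt (z : ℝ) (hz : 0 < z) (n : ℕ) (hn : 1 ≤ n) :
    gaussMeasure {x | Irrational x ∧ z < (cfDigit n x : ℝ)} =
      ENNReal.ofReal ((1 / Real.log 2) * Real.log (1 + 1 / ((⌊z⌋₊ : ℝ) + 1))) :=
  gauss_measure_digit_gt_general z n
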